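/- Let G be a Garside group of finite type and x ∈ G with ℓ(x) > 1. Then: (1) if Δ ≼ φ(x)ι(x) and φ(x)ι(x) ≼ Δ, then 𝔰(x) = τ(d(x)) = c(x) and ℓ(𝔰(x)) < ℓ(x); (2) if Δ ⋠ φ(x)ι(x) and φ(x)ι(x) ≼ Δ, then 𝔰(x) = c(d(x)) = c(x) and ℓ(𝔰(x)) < ℓ(x); (3) if Δ ≼ φ(x)ι(x) and φ(x)ι(x) ⋠ Δ, then 𝔰(x) = τ(d(x)) = d(c(x)) and ℓ(𝔰(x)) < ℓ(x); (4) if Δ ⋠ φ(x)ι(x) and φ(x)ι(x) ⋠ Δ, then 𝔰(x) = c(d(x)) = d(c(x)). Moreover, if ℓ(c(d(x))) = ℓ(x) or ℓ(d(c(x))) = ℓ(x), then case (4) applies, and in particular d(c(x)) = c(d(x)). -/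

import Mathlib

/-!
Since `ι(x⁻¹) = φ(x)⁻¹Δ`, the preferred prefix is `𝔭(x) = ι(x) ∧ φ(x)⁻¹Δ`. So
`Δ ≼ φ(x)ι(x)` means `𝔭(x) = φ(x)⁻¹Δ`, i.e. `𝔰(x) = τ(d(x))`, and `φ(x)ι(x) ≼ Δ` means
`𝔭(x) = ι(x)`, i.e. `𝔰(x) = c(x)`. For `ℓ(x) ≥ 2` one computes
`(d(x) Δ^(-inf x)) ∧ Δ = φ(x)𝔭(x)`: this equals `Δ` exactly when `Δ ≼ φ(x)ι(x)`, and then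
decycling raises `inf`; otherwise it is `ι(d(x))`, whence `c(d(x)) = 𝔰(x)`. The claims about
cycling are the claims about decycling applied to `x⁻¹`, as `c(x⁻¹) = τ(d(x))⁻¹`. Finally, in
cases (1)–(3) both `c(d(x))` and `d(c(x))` are strictly shorter than `x`.
-/

namespace GarsidePaper

/-- A Garside structure of finite type on a group `G`: a positive submonoid `P` with
`P ∩ P⁻¹ = {1}`, a Garside element `Δ ∈ P`, the prefix order `a ≼ b ↔ a⁻¹b ∈ P`
a lattice order (with meet `wedge` and join `vee`), the simple elements `[1,Δ]`
generating `G` and being finite, `Δ⁻¹PΔ = P`, a finite norm on positive elements,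
and the infimum and supremum functions `inf`, `sup` characterised by
`Δ^(inf x) ≼ x ≼ Δ^(sup x)` with `inf x` maximal and `sup x` minimal. -/
structure Garside (G : Type*) [Group G] where
  P : Submonoid G
  Δ : G
  purity : ∀ a : G, a ∈ P → a⁻¹ ∈ P → a = 1
  delta_mem : Δ ∈ P
  wedge : G → G → G
  vee : G → G → G
  wedge_le_left : ∀ a b : G, (wedge a b)⁻¹ * a ∈ P
  wedge_le_right : ∀ a b : G, (wedge a b)⁻¹ * b ∈ P
  le_wedge : ∀ a b c : G, c⁻¹ * a ∈ P → c⁻¹ * b ∈ P → c⁻¹ * wedge a b ∈ P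
  le_vee_left : ∀ a b : G, a⁻¹ * vee a b ∈ P
  le_vee_right : ∀ a b : G, b⁻¹ * vee a b ∈ P
  vee_le : ∀ a b c : G, a⁻¹ * c ∈ P → b⁻¹ * c ∈ P → (vee a b)⁻¹ * c ∈ P
  simples_generate : Subgroup.closure {a : G | a ∈ P ∧ a⁻¹ * Δ ∈ P} = (⊤ : Subgroup G)
  conj_pos : ∀ a : G, a ∈ P → Δ⁻¹ * a * Δ ∈ P
  norm : G → ℕ
  norm_exists : ∀ x : G, x ∈ P → x ≠ 1 →
    ∃ l : List G, (∀ s ∈ l, s ∈ P ∧ s ≠ 1) ∧ l.prod = x ∧ l.length = norm x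
  norm_max : ∀ x : G, x ∈ P → x ≠ 1 →
    ∀ l : List G, (∀ s ∈ l, s ∈ P ∧ s ≠ 1) → l.prod = x → l.length ≤ norm x
  simples_finite : Set.Finite {a : G | a ∈ P ∧ a⁻¹ * Δ ∈ P}
  inf : G → ℤ
  sup : G → ℤ
  inf_le : ∀ x : G, (Δ ^ inf x)⁻¹ * x ∈ P
  inf_max : ∀ (x : G) (p : ℤ), (Δ ^ p)⁻¹ * x ∈ P → p ≤ inf x
  le_sup : ∀ x : G, x⁻¹ * Δ ^ sup x ∈ P
  sup_min : ∀ (x : G) (q : ℤ), x⁻¹ * Δ ^ q ∈ P → sup x ≤ q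

namespace Garside

variable {G : Type*} [Group G]

/-- The prefix order `a ≼ b`. -/
def le (S : Garside G) (a b : G) : Prop := a⁻¹ * b ∈ S.P

/-- The canonical length `ℓ(x) = sup(x) - inf(x)`. -/
def len (S : Garside G) (x : G) : ℤ := S.sup x - S.inf x

/-- The initial factor `ι(x) = (x Δ^(-inf x)) ∧ Δ`. -/
def iota (S : Garside G) (x : G) : G := S.wedge (x * S.Δ ^ (-S.inf x)) S.Δ

/-- The preferred prefix `𝔭(x) = ι(x) ∧ ι(x⁻¹)`. -/
def pp (S : Garside G) (x : G) : G := S.wedge (S.iota x) (S.iota x⁻¹)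

/-- Cyclic sliding `𝔰(x) = 𝔭(x)⁻¹ x 𝔭(x)`. -/
def sl (S : Garside G) (x : G) : G := (S.pp x)⁻¹ * x * S.pp x

/-- The final factor `φ(x) = (Δ^(sup x - 1) ∧ x)⁻¹ x`. -/
def phi (S : Garside G) (x : G) : G := (S.wedge (S.Δ ^ (S.sup x - 1)) x)⁻¹ * x

/-- Conjugation by `Δ`: `τ(x) = Δ⁻¹ x Δ`. -/
def tau (S : Garside G) (x : G) : G := S.Δ⁻¹ * x * S.Δ

/-- Cycling `c(x) = ι(x)⁻¹ x ι(x)`. -/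
def cyc (S : Garside G) (x : G) : G := (S.iota x)⁻¹ * x * S.iota x

/-- Decycling `d(x) = φ(x) x φ(x)⁻¹`. -/
def dec (S : Garside G) (x : G) : G := S.phi x * x * (S.phi x)⁻¹

/-- The transport `α^{(1)} = 𝔭(x)⁻¹ α 𝔭(x^α)` of `α` at `x`. -/
def transport (S : Garside G) (x α : G) : G := (S.pp x)⁻¹ * α * S.pp (α⁻¹ * x * α)

/-- The iterated transport: `itTransport x i α = α^{(i)}`, the transport of `α^{(i-1)}`
at `𝔰^{i-1}(x)`, with `α^{(0)} = α`. -/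
def itTransport (S : Garside G) (x : G) : ℕ → G → G
  | 0, α => α
  | i + 1, α => S.transport ((S.sl)^[i] x) (S.itTransport x i α)

/-- `𝔓_i(x) = 𝔭(x) 𝔭(𝔰(x)) ⋯ 𝔭(𝔰^{i-1}(x))`, with `𝔓₀(x) = 1`. -/
def PP (S : Garside G) (x : G) : ℕ → G
  | 0 => 1
  | i + 1 => S.PP x i * S.pp ((S.sl)^[i] x)

/-- The summit set `SS(x)`. -/
def SS (S : Garside G) (x : G) : Set G :=
  {y | IsConj x y ∧ ∀ z : G, IsConj x z → S.inf z ≤ S.inf y}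

/-- The super summit set `SSS(x)`. -/
def SSS (S : Garside G) (x : G) : Set G :=
  {y | IsConj x y ∧ (∀ z : G, IsConj x z → S.inf z ≤ S.inf y) ∧
       (∀ z : G, IsConj x z → S.sup y ≤ S.sup z)}

/-- The ultra summit set `USS(x)`. -/
def USS (S : Garside G) (x : G) : Set G :=
  {y | y ∈ S.SSS x ∧ ∃ m : ℕ, 1 ≤ m ∧ (S.cyc)^[m] y = y}

/-- The reduced super summit set `RSSS(x)`. -/
def RSSS (S : Garside G) (x : G) : Set G :=
  {y | IsConj x y ∧ (∃ m : ℕ, 1 ≤ m ∧ (S.cyc)^[m] y = y) ∧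
       (∃ n : ℕ, 1 ≤ n ∧ (S.dec)^[n] y = y)}

/-- The set of sliding circuits `SC(x)`. -/
def SC (S : Garside G) (x : G) : Set G :=
  {y | IsConj x y ∧ ∃ m : ℕ, 1 ≤ m ∧ (S.sl)^[m] y = y}

end Garside

lemma exists_pos_iterate_eqOn_id {α : Type*} {f : α → α} {s : Set α} (hs : s.Finite)
    (hmaps : Set.MapsTo f s s) (hinj : Set.InjOn f s) :
    ∃ m : ℕ, 0 < m ∧ ∀ a ∈ s, f^[m] a = a := by
  have hbij : Set.BijOn f s s := (hs.injOn_iff_bijOn_of_mapsTo hmaps).mp hinj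
  have : Finite s := hs.to_subtype
  obtain ⟨m, hm, hperiodic⟩ := isOfFinOrder_of_finite hbij.equiv
  have hpow : hbij.equiv ^ m = 1 := by
    simpa [Function.IsPeriodicPt, Function.IsFixedPt] using hperiodic
  refine ⟨m, hm, fun a ha => ?_⟩
  have h := Equiv.congr_fun hpow ⟨a, ha⟩
  rw [Equiv.Perm.coe_one, id_eq, Subtype.ext_iff, Equiv.Perm.coe_pow] at h
  exact (hbij.mapsTo.coe_iterate_restrict ⟨a, ha⟩ m).symm.trans h

namespace Garside

variable {G : Type*} [Group G] (S : Garside G)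

section PrefixOrder

lemma le_iff_of_inv_mul_eq {a b c d : G} (h : a⁻¹ * b = c⁻¹ * d) : S.le a b ↔ S.le c d := by
  rw [le, le, h]

lemma le_refl (a : G) : S.le a a := by
  rw [le, inv_mul_cancel]
  exact S.P.one_mem

lemma le_trans {a b c : G} (hab : S.le a b) (hbc : S.le b c) : S.le a c := by
  have h := S.P.mul_mem hab hbc
  rwa [show a⁻¹ * b * (b⁻¹ * c) = a⁻¹ * c by group] at h

lemma le_antisymm {a b : G} (hab : S.le a b) (hba : S.le b a) : a = b :=
  inv_mul_eq_one.mp (S.purity _ hab (by rwa [mul_inv_rev, inv_inv]))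

lemma one_le_iff {a : G} : S.le 1 a ↔ a ∈ S.P := by
  rw [le, inv_one, one_mul]

lemma mul_le_mul_left_iff (c : G) {a b : G} : S.le (c * a) (c * b) ↔ S.le a b :=
  S.le_iff_of_inv_mul_eq (by group)

lemma wedge_eq_of_forall {a b c : G} (hca : S.le c a) (hcb : S.le c b)
    (h : ∀ d, S.le d a → S.le d b → S.le d c) : S.wedge a b = c :=
  S.le_antisymm (h _ (S.wedge_le_left a b) (S.wedge_le_right a b)) (S.le_wedge a b c hca hcb)

lemma wedge_comm (a b : G) : S.wedge a b = S.wedge b a :=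
  S.wedge_eq_of_forall (S.wedge_le_right b a) (S.wedge_le_left b a)
    fun _ hda hdb => S.le_wedge b a _ hdb hda

lemma wedge_eq_left {a b : G} (h : S.le a b) : S.wedge a b = a :=
  S.wedge_eq_of_forall (S.le_refl a) h fun _ hda _ => hda

lemma wedge_eq_right {a b : G} (h : S.le b a) : S.wedge a b = b :=
  S.wedge_eq_of_forall h (S.le_refl b) fun _ _ hdb => hdb

lemma wedge_wedge_of_le {a b c : G} (h : S.le c a) :
    S.wedge (S.wedge a b) c = S.wedge b c :=
  S.wedge_eq_of_forall
    (S.le_wedge _ _ _ (S.le_trans (S.wedge_le_right b c) h) (S.wedge_le_left b c))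
    (S.wedge_le_right b c)
    fun _ hd hdc => S.le_wedge _ _ _ (S.le_trans hd (S.wedge_le_right a b)) hdc

lemma mul_wedge (c a b : G) : c * S.wedge a b = S.wedge (c * a) (c * b) := by
  refine (S.wedge_eq_of_forall ((S.mul_le_mul_left_iff c).mpr (S.wedge_le_left a b))
    ((S.mul_le_mul_left_iff c).mpr (S.wedge_le_right a b)) fun d hda hdb => ?_).symm
  rw [← mul_inv_cancel_left c d, S.mul_le_mul_left_iff] at hda hdb ⊢
  exact S.le_wedge _ _ _ hda hdb

/-- If `d` is a common prefix of `a * b` and `Δ`, so is `d ∨ a`. -/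
lemma wedge_mul_delta_of_le_delta {a b : G} (ha : S.le a S.Δ) (hb : b ∈ S.P) :
    S.wedge (a * b) S.Δ = a * S.wedge b (a⁻¹ * S.Δ) := by
  refine S.wedge_eq_of_forall ((S.mul_le_mul_left_iff a).mpr (S.wedge_le_left _ _)) ?_
    fun d hdab hdΔ => ?_
  · exact (S.le_iff_of_inv_mul_eq (by group)).mp
      ((S.mul_le_mul_left_iff a).mpr (S.wedge_le_right b (a⁻¹ * S.Δ)))
  · have hab : S.le a (a * b) := (S.le_iff_of_inv_mul_eq (by group)).mpr (S.one_le_iff.mpr hb)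
    have hjoin : S.le (a⁻¹ * S.vee d a) (S.wedge b (a⁻¹ * S.Δ)) :=
      S.le_wedge _ _ _ ((S.le_iff_of_inv_mul_eq (by group)).mp (S.vee_le _ _ _ hdab hab))
        ((S.mul_le_mul_left_iff a⁻¹).mpr (S.vee_le _ _ _ hdΔ ha))
    exact S.le_trans (S.le_vee_left d a) ((S.le_iff_of_inv_mul_eq (by group)).mp hjoin)

end PrefixOrder

section DeltaConjugation

lemma iterate_tau (n : ℕ) (a : G) : S.tau^[n] a = (S.Δ ^ n)⁻¹ * a * S.Δ ^ n := by
  induction n generalizing a with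
  | zero => simp
  | succ k ih => rw [Function.iterate_succ_apply', ih, tau, pow_succ]; group

/-- `τ` permutes the finitely many simple elements, so some power of it fixes all of them;
as they generate `G`, the corresponding power of `Δ` is central. -/
lemma exists_delta_pow_mem_center : ∃ m : ℕ, 0 < m ∧ S.Δ ^ m ∈ Subgroup.center G := by
  set simples := {a : G | a ∈ S.P ∧ a⁻¹ * S.Δ ∈ S.P}
  have hmaps : Set.MapsTo S.tau simples simples := fun a ha =>
    ⟨S.conj_pos a ha.1, by
      simpa only [tau, show (S.Δ⁻¹ * a * S.Δ)⁻¹ * S.Δ = S.Δ⁻¹ * (a⁻¹ * S.Δ) * S.Δ by group]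
        using S.conj_pos _ ha.2⟩
  have hinj : Set.InjOn S.tau simples := fun a _ b _ hab => by simpa [tau] using hab
  obtain ⟨m, hm, hfix⟩ := exists_pos_iterate_eqOn_id S.simples_finite hmaps hinj
  have hcomm : S.Δ ^ m ∈ Subgroup.centralizer simples := by
    intro a ha
    have h := hfix a ha
    rw [S.iterate_tau, mul_assoc, inv_mul_eq_iff_eq_mul] at h
    exact h
  rw [← Subgroup.centralizer_closure, S.simples_generate, Subgroup.coe_top,
    Subgroup.centralizer_univ] at hcomm
  exact ⟨m, hm, hcomm⟩

lemma conj_delta_pow_mem (n : ℕ) {a : G} (ha : a ∈ S.P) : (S.Δ ^ n)⁻¹ * a * S.Δ ^ n ∈ S.P :=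
  S.iterate_tau n a ▸ Set.MapsTo.iterate (fun b hb => S.conj_pos b hb) n ha

lemma delta_mul_mul_delta_inv_mem {a : G} (ha : a ∈ S.P) : S.Δ * a * S.Δ⁻¹ ∈ S.P := by
  obtain ⟨m, hm, hcenter⟩ := S.exists_delta_pow_mem_center
  obtain ⟨k, rfl⟩ : ∃ k, m = k + 1 := ⟨m - 1, by omega⟩
  have hcomm : a * S.Δ ^ (k + 1) = S.Δ ^ (k + 1) * a := Subgroup.mem_center_iff.mp hcenter a
  convert S.conj_delta_pow_mem k ha using 1
  calc S.Δ * a * S.Δ⁻¹ = (S.Δ ^ k)⁻¹ * (S.Δ ^ (k + 1) * a) * S.Δ⁻¹ := by rw [pow_succ]; group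
    _ = (S.Δ ^ k)⁻¹ * a * S.Δ ^ k := by rw [← hcomm, pow_succ]; group

lemma conj_delta_zpow_mem (k : ℤ) {a : G} (ha : a ∈ S.P) :
    (S.Δ ^ k)⁻¹ * a * S.Δ ^ k ∈ S.P := by
  induction k using Int.induction_on with
  | zero => simpa using ha
  | succ k ih =>
    convert S.conj_pos _ ih using 1
    rw [zpow_add_one]; group
  | pred k ih =>
    convert S.delta_mul_mul_delta_inv_mem ih using 1
    rw [zpow_sub_one]; group

lemma conj_delta_zpow_mem_iff (k : ℤ) {a : G} : (S.Δ ^ k)⁻¹ * a * S.Δ ^ k ∈ S.P ↔ a ∈ S.P :=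
  ⟨fun h => by simpa [mul_assoc] using S.conj_delta_zpow_mem (-k) h, S.conj_delta_zpow_mem k⟩

lemma le_iff_of_inv_mul_eq_conj (k : ℤ) {a b c d : G}
    (h : a⁻¹ * b = (S.Δ ^ k)⁻¹ * (c⁻¹ * d) * S.Δ ^ k) : S.le a b ↔ S.le c d := by
  rw [le, le, h]
  exact S.conj_delta_zpow_mem_iff k

lemma mul_delta_zpow_le_mul_delta_zpow_iff (k : ℤ) {a b : G} :
    S.le (a * S.Δ ^ k) (b * S.Δ ^ k) ↔ S.le a b :=
  S.le_iff_of_inv_mul_eq_conj k (by group)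

lemma tau_le_tau_iff {a b : G} : S.le (S.tau a) (S.tau b) ↔ S.le a b := by
  rw [tau, tau, mul_assoc, mul_assoc, S.mul_le_mul_left_iff, ← zpow_one S.Δ,
    S.mul_delta_zpow_le_mul_delta_zpow_iff]

lemma wedge_mul_delta_zpow (a b : G) (k : ℤ) :
    S.wedge (a * S.Δ ^ k) (b * S.Δ ^ k) = S.wedge a b * S.Δ ^ k := by
  refine S.wedge_eq_of_forall ((S.mul_delta_zpow_le_mul_delta_zpow_iff k).mpr (S.wedge_le_left a b))
    ((S.mul_delta_zpow_le_mul_delta_zpow_iff k).mpr (S.wedge_le_right a b)) fun d hda hdb => ?_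
  rw [← inv_mul_cancel_right d (S.Δ ^ k), S.mul_delta_zpow_le_mul_delta_zpow_iff] at hda hdb ⊢
  exact S.le_wedge _ _ _ hda hdb

lemma tau_wedge (a b : G) : S.tau (S.wedge a b) = S.wedge (S.tau a) (S.tau b) := by
  calc S.tau (S.wedge a b) = S.Δ⁻¹ * (S.wedge a b * S.Δ ^ (1 : ℤ)) := by
        rw [tau, zpow_one, mul_assoc]
    _ = S.wedge (S.tau a) (S.tau b) := by
        rw [← S.wedge_mul_delta_zpow, S.mul_wedge, zpow_one]
        simp only [tau, mul_assoc]

end DeltaConjugation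

section InfSup

lemma delta_zpow_mem {k : ℤ} (hk : 0 ≤ k) : S.Δ ^ k ∈ S.P := by
  lift k to ℕ using hk
  rw [zpow_natCast]
  exact pow_mem S.delta_mem k

lemma delta_zpow_le_delta_zpow {j k : ℤ} (h : j ≤ k) : S.le (S.Δ ^ j) (S.Δ ^ k) := by
  rw [le, ← zpow_neg, ← zpow_add]
  exact S.delta_zpow_mem (by omega)

lemma le_delta_zpow_iff {x : G} {k : ℤ} : S.le x (S.Δ ^ k) ↔ S.sup x ≤ k :=
  ⟨S.sup_min x k, fun h => S.le_trans (S.le_sup x) (S.delta_zpow_le_delta_zpow h)⟩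

lemma delta_zpow_le_iff {x : G} {k : ℤ} : S.le (S.Δ ^ k) x ↔ k ≤ S.inf x :=
  ⟨S.inf_max x k, fun h => S.le_trans (S.delta_zpow_le_delta_zpow h) (S.inf_le x)⟩

/-- If `Δ^j ≼ Δ^k` with `k < j` then `Δ^(j-k) = 1`, and `inf 1` could not be maximal. -/
lemma delta_zpow_le_delta_zpow_iff {j k : ℤ} : S.le (S.Δ ^ j) (S.Δ ^ k) ↔ j ≤ k := by
  refine ⟨fun h => ?_, S.delta_zpow_le_delta_zpow⟩
  by_contra! hkj
  have hone : S.Δ ^ (j - k) = 1 :=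
    S.purity _ (S.delta_zpow_mem (by omega))
      (by rwa [show (S.Δ ^ (j - k))⁻¹ = (S.Δ ^ j)⁻¹ * S.Δ ^ k by group])
  have := S.inf_max 1 (S.inf 1 + (j - k)) (by simpa only [zpow_add, hone, mul_one] using S.inf_le 1)
  omega

lemma inf_le_sup (x : G) : S.inf x ≤ S.sup x :=
  S.delta_zpow_le_delta_zpow_iff.mp (S.le_trans (S.inf_le x) (S.le_sup x))

lemma inf_eq_of_forall {y : G} {n : ℤ} (h : ∀ j : ℤ, S.le (S.Δ ^ j) y ↔ j ≤ n) : S.inf y = n :=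
  Int.le_antisymm ((h _).mp (S.inf_le y)) (S.delta_zpow_le_iff.mp ((h n).mpr le_rfl))

lemma delta_zpow_le_inv_iff {x : G} {j : ℤ} : S.le (S.Δ ^ j) x⁻¹ ↔ S.le x (S.Δ ^ (-j)) :=
  S.le_iff_of_inv_mul_eq_conj j (by group)

lemma inf_inv (x : G) : S.inf x⁻¹ = -S.sup x :=
  S.inf_eq_of_forall fun j => by
    rw [S.delta_zpow_le_inv_iff, S.le_delta_zpow_iff]
    omega

lemma sup_inv (x : G) : S.sup x⁻¹ = -S.inf x := by
  have := S.inf_inv x⁻¹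
  rw [inv_inv] at this
  omega

lemma len_inv (x : G) : S.len x⁻¹ = S.len x := by
  rw [len, len, S.inf_inv, S.sup_inv]
  ring

lemma tau_delta_zpow (j : ℤ) : S.tau (S.Δ ^ j) = S.Δ ^ j := by
  rw [tau]
  group

lemma tau_inv (x : G) : S.tau x⁻¹ = (S.tau x)⁻¹ := by
  simp only [tau, mul_inv_rev, inv_inv, mul_assoc]

lemma inf_tau (x : G) : S.inf (S.tau x) = S.inf x :=
  S.inf_eq_of_forall fun j => by
    rw [← S.tau_delta_zpow j, S.tau_le_tau_iff, S.delta_zpow_le_iff]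

lemma sup_tau (x : G) : S.sup (S.tau x) = S.sup x := by
  have h := S.inf_tau x⁻¹
  rw [S.tau_inv, S.inf_inv, S.inf_inv] at h
  omega

lemma len_tau (x : G) : S.len (S.tau x) = S.len x := by
  rw [len, len, S.inf_tau, S.sup_tau]

lemma delta_le_mul_delta_zpow_neg_iff {y : G} {p : ℤ} :
    S.le S.Δ (y * S.Δ ^ (-p)) ↔ p + 1 ≤ S.inf y := by
  rw [← S.mul_delta_zpow_le_mul_delta_zpow_iff p, zpow_neg, inv_mul_cancel_right,
    ← zpow_one_add, S.delta_zpow_le_iff, add_comm]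

lemma eq_delta_zpow_of_len_eq_zero {x : G} (h : S.len x = 0) : x = S.Δ ^ S.sup x := by
  have hinf : S.inf x = S.sup x := by rw [len] at h; omega
  exact S.le_antisymm (S.le_sup x) (hinf ▸ S.inf_le x)

end InfSup

section Factors

lemma phi_mem (x : G) : S.phi x ∈ S.P := S.wedge_le_right _ _

lemma dec_eq_phi_mul (x : G) : S.dec x = S.phi x * S.wedge (S.Δ ^ (S.sup x - 1)) x := by
  rw [dec, phi]
  group

lemma wedge_delta_zpow_sub_one_mul_delta (x : G) :
    S.wedge (S.Δ ^ (S.sup x - 1)) x * S.Δ = S.wedge (S.Δ ^ S.sup x) (x * S.Δ) := by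
  have h := S.wedge_mul_delta_zpow (S.Δ ^ (S.sup x - 1)) x 1
  rw [zpow_one, ← zpow_add_one, sub_add_cancel] at h
  exact h.symm

lemma phi_le_delta (x : G) : S.le (S.phi x) S.Δ := by
  have h : S.le x (S.wedge (S.Δ ^ (S.sup x - 1)) x * S.Δ) := by
    rw [S.wedge_delta_zpow_sub_one_mul_delta]
    exact S.le_wedge _ _ _ (S.le_sup x)
      ((S.le_iff_of_inv_mul_eq (by group)).mp (S.one_le_iff.mpr S.delta_mem))
  exact (S.le_iff_of_inv_mul_eq (by rw [phi]; group)).mpr h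

lemma iota_inv (x : G) : S.iota x⁻¹ = (S.phi x)⁻¹ * S.Δ :=
  calc S.iota x⁻¹ = S.wedge (x⁻¹ * S.Δ ^ S.sup x) (x⁻¹ * (x * S.Δ)) := by
        rw [iota, S.inf_inv, neg_neg, inv_mul_cancel_left]
    _ = x⁻¹ * (S.wedge (S.Δ ^ (S.sup x - 1)) x * S.Δ) := by
        rw [S.wedge_delta_zpow_sub_one_mul_delta, S.mul_wedge]
    _ = (S.phi x)⁻¹ * S.Δ := by rw [phi]; group

lemma phi_inv (x : G) : S.phi x⁻¹ = S.Δ * (S.iota x)⁻¹ := by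
  rw [← inv_inv x, S.iota_inv x⁻¹, inv_inv]
  group

lemma pp_eq_wedge (x : G) : S.pp x = S.wedge (S.iota x) ((S.phi x)⁻¹ * S.Δ) := by
  rw [pp, S.iota_inv]

lemma pp_le_iota (x : G) : S.le (S.pp x) (S.iota x) := S.wedge_le_left _ _

lemma pp_inv (x : G) : S.pp x⁻¹ = S.pp x := by
  rw [pp, pp, inv_inv, S.wedge_comm]

lemma sl_inv (x : G) : S.sl x⁻¹ = (S.sl x)⁻¹ := by
  rw [sl, sl, S.pp_inv]
  group

lemma cyc_inv (x : G) : S.cyc x⁻¹ = (S.tau (S.dec x))⁻¹ := by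
  rw [cyc, tau, dec, S.iota_inv]
  group

lemma iota_tau (x : G) : S.iota (S.tau x) = S.tau (S.iota x) := by
  rw [iota, iota, S.inf_tau, S.tau_wedge]
  congr 1 <;> simp only [tau] <;> group

lemma cyc_tau (x : G) : S.cyc (S.tau x) = S.tau (S.cyc x) := by
  rw [cyc, cyc, S.iota_tau, tau, tau, tau]
  group

end Factors

section PreferredPrefix

variable {x : G}

lemma pp_of_delta_le (hA : S.le S.Δ (S.phi x * S.iota x)) : S.pp x = (S.phi x)⁻¹ * S.Δ := by
  rw [S.pp_eq_wedge]
  exact S.wedge_eq_right ((S.le_iff_of_inv_mul_eq (by group)).mp hA)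

lemma pp_of_le_delta (hB : S.le (S.phi x * S.iota x) S.Δ) : S.pp x = S.iota x := by
  rw [S.pp_eq_wedge]
  exact S.wedge_eq_left ((S.le_iff_of_inv_mul_eq (by group)).mp hB)

lemma sl_of_delta_le (hA : S.le S.Δ (S.phi x * S.iota x)) : S.sl x = S.tau (S.dec x) := by
  rw [sl, S.pp_of_delta_le hA, tau, dec]
  group

lemma sl_of_le_delta (hB : S.le (S.phi x * S.iota x) S.Δ) : S.sl x = S.cyc x := by
  rw [sl, cyc, S.pp_of_le_delta hB]

variable (x) in
lemma delta_le_phi_mul_iota_inv_iff :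
    S.le S.Δ (S.phi x⁻¹ * S.iota x⁻¹) ↔ S.le (S.phi x * S.iota x) S.Δ := by
  rw [S.phi_inv, S.iota_inv]
  exact S.le_iff_of_inv_mul_eq (by group)

end PreferredPrefix

section Decycling

lemma sup_dec_le (x : G) : S.sup (S.dec x) ≤ S.sup x := by
  refine S.le_delta_zpow_iff.mp (S.le_trans (b := S.phi x * S.Δ ^ (S.sup x - 1)) ?_ ?_)
  · rw [S.dec_eq_phi_mul, S.mul_le_mul_left_iff]
    exact S.wedge_le_left _ _
  · exact (S.le_iff_of_inv_mul_eq_conj (S.sup x - 1) (by group)).mpr (S.phi_le_delta x)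

lemma delta_zpow_inf_le_wedge {x : G} (h : 1 ≤ S.len x) :
    S.le (S.Δ ^ S.inf x) (S.wedge (S.Δ ^ (S.sup x - 1)) x) :=
  S.le_wedge _ _ _ (S.delta_zpow_le_delta_zpow (by rw [len] at h; omega)) (S.inf_le x)

lemma inf_le_inf_dec {x : G} (h : 1 ≤ S.len x) : S.inf x ≤ S.inf (S.dec x) := by
  refine S.delta_zpow_le_iff.mp (S.le_trans (b := S.phi x * S.Δ ^ S.inf x) ?_ ?_)
  · exact (S.le_iff_of_inv_mul_eq_conj (c := 1) (S.inf x) (by group)).mpr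
      (S.one_le_iff.mpr (S.phi_mem x))
  · rw [S.dec_eq_phi_mul, S.mul_le_mul_left_iff]
    exact S.delta_zpow_inf_le_wedge h

lemma dec_of_len_eq_zero {x : G} (h : S.len x = 0) : S.dec x = x := by
  have hinf : S.inf x = S.sup x := by rw [len] at h; omega
  have hx := S.eq_delta_zpow_of_len_eq_zero h
  have hW : S.wedge (S.Δ ^ (S.sup x - 1)) x = S.Δ ^ (S.sup x - 1) :=
    S.wedge_eq_left (S.delta_zpow_le_iff.mpr (by omega))
  rw [S.dec_eq_phi_mul, phi, hW]
  set r := S.sup x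
  rw [hx]
  group

lemma len_dec_le (x : G) : S.len (S.dec x) ≤ S.len x := by
  rcases (sub_nonneg.mpr (S.inf_le_sup x)).eq_or_lt with h | h
  · rw [S.dec_of_len_eq_zero h.symm]
  · have := S.inf_le_inf_dec (x := x) h
    have := S.sup_dec_le x
    simp only [len] at *
    omega

end Decycling

section Sliding

variable {x : G}

/-- `d(x) = φ(x) (Δ^(sup x - 1) ∧ x)` starts with the simple element `φ(x)`, so meeting with `Δ`
only sees `(Δ^(sup x - 1) ∧ x) Δ^(-inf x) ∧ φ(x)⁻¹Δ`, which for `ℓ(x) ≥ 2` is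
`ι(x) ∧ ι(x⁻¹) = 𝔭(x)`. -/
lemma wedge_dec_mul_delta_zpow_neg_inf (h : 1 < S.len x) :
    S.wedge (S.dec x * S.Δ ^ (-S.inf x)) S.Δ = S.phi x * S.pp x := by
  have hsimple : S.le ((S.phi x)⁻¹ * S.Δ) S.Δ :=
    (S.le_iff_of_inv_mul_eq_conj (c := 1) 1 (by group)).mpr (S.one_le_iff.mpr (S.phi_mem x))
  have hsimple' : S.le ((S.phi x)⁻¹ * S.Δ) (S.Δ ^ (S.sup x - 1 - S.inf x)) :=
    S.le_trans hsimple (by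
      simpa using S.delta_zpow_le_delta_zpow (j := 1) (k := S.sup x - 1 - S.inf x)
        (by rw [len] at h; omega))
  have hpos : S.wedge (S.Δ ^ (S.sup x - 1)) x * S.Δ ^ (-S.inf x) ∈ S.P := by
    have := (S.mul_delta_zpow_le_mul_delta_zpow_iff (-S.inf x)).mpr
      (S.delta_zpow_inf_le_wedge h.le)
    rwa [← zpow_add, add_neg_cancel, zpow_zero, S.one_le_iff] at this
  calc S.wedge (S.dec x * S.Δ ^ (-S.inf x)) S.Δ
      = S.wedge (S.phi x * (S.wedge (S.Δ ^ (S.sup x - 1)) x * S.Δ ^ (-S.inf x))) S.Δ := by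
        rw [S.dec_eq_phi_mul, mul_assoc]
    _ = S.phi x * S.wedge (S.wedge (S.Δ ^ (S.sup x - 1)) x * S.Δ ^ (-S.inf x))
          ((S.phi x)⁻¹ * S.Δ) :=
        S.wedge_mul_delta_of_le_delta (S.phi_le_delta x) hpos
    _ = S.phi x * S.wedge (S.wedge (S.Δ ^ (S.sup x - 1 - S.inf x)) (x * S.Δ ^ (-S.inf x)))
          ((S.phi x)⁻¹ * S.Δ) := by
        rw [← S.wedge_mul_delta_zpow, ← zpow_add, ← sub_eq_add_neg]
    _ = S.phi x * S.pp x := by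
        rw [S.wedge_wedge_of_le hsimple', S.pp_eq_wedge, iota, S.wedge_comm _ S.Δ,
          S.wedge_wedge_of_le hsimple]

lemma inf_dec_of_delta_le (h : 1 < S.len x) (hA : S.le S.Δ (S.phi x * S.iota x)) :
    S.inf x + 1 ≤ S.inf (S.dec x) := by
  have hwedge := S.wedge_dec_mul_delta_zpow_neg_inf h
  rw [S.pp_of_delta_le hA, mul_inv_cancel_left] at hwedge
  have hle : S.le (S.wedge (S.dec x * S.Δ ^ (-S.inf x)) S.Δ) (S.dec x * S.Δ ^ (-S.inf x)) :=
    S.wedge_le_left _ _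
  rw [hwedge] at hle
  exact S.delta_le_mul_delta_zpow_neg_iff.mp hle

lemma inf_dec_of_not_delta_le (h : 1 < S.len x) (hA : ¬S.le S.Δ (S.phi x * S.iota x)) :
    S.inf (S.dec x) = S.inf x := by
  refine Int.le_antisymm ?_ (S.inf_le_inf_dec h.le)
  by_contra! hlt
  have hwedge := S.wedge_dec_mul_delta_zpow_neg_inf h
  rw [S.wedge_eq_right (S.delta_le_mul_delta_zpow_neg_iff.mpr (by omega)), eq_comm,
    ← eq_inv_mul_iff_mul_eq] at hwedge
  exact hA ((S.le_iff_of_inv_mul_eq (by group)).mp (hwedge ▸ S.pp_le_iota x))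

lemma cyc_dec_of_not_delta_le (h : 1 < S.len x) (hA : ¬S.le S.Δ (S.phi x * S.iota x)) :
    S.cyc (S.dec x) = S.sl x := by
  have hiota : S.iota (S.dec x) = S.phi x * S.pp x := by
    rw [iota, S.inf_dec_of_not_delta_le h hA, S.wedge_dec_mul_delta_zpow_neg_inf h]
  rw [cyc, hiota, sl, dec]
  group

lemma len_dec_lt_of_delta_le (h : 1 < S.len x) (hA : S.le S.Δ (S.phi x * S.iota x)) :
    S.len (S.dec x) < S.len x := by
  have := S.inf_dec_of_delta_le h hA
  have := S.sup_dec_le x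
  simp only [len]
  omega

lemma tau_injective : Function.Injective S.tau := fun a b hab => by
  simpa [tau] using hab

variable (x) in
lemma len_cyc : S.len (S.cyc x) = S.len (S.dec x⁻¹) := by
  conv_lhs => rw [← inv_inv x, S.cyc_inv, S.len_inv, S.len_tau]

variable (x) in
lemma len_cyc_le : S.len (S.cyc x) ≤ S.len x := by
  rw [S.len_cyc, ← S.len_inv x]
  exact S.len_dec_le _

lemma len_cyc_lt_of_le_delta (h : 1 < S.len x) (hB : S.le (S.phi x * S.iota x) S.Δ) :
    S.len (S.cyc x) < S.len x := by
  rw [S.len_cyc, ← S.len_inv x]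
  exact S.len_dec_lt_of_delta_le (by rwa [S.len_inv]) ((S.delta_le_phi_mul_iota_inv_iff x).mpr hB)

lemma dec_cyc_of_not_le_delta (h : 1 < S.len x) (hB : ¬S.le (S.phi x * S.iota x) S.Δ) :
    S.dec (S.cyc x) = S.sl x := by
  have hsl : S.cyc (S.dec x⁻¹) = (S.sl x)⁻¹ := by
    rw [S.cyc_dec_of_not_delta_le (by rwa [S.len_inv])
      (by rwa [S.delta_le_phi_mul_iota_inv_iff]), S.sl_inv]
  have hcyc : S.cyc x = (S.tau (S.dec x⁻¹))⁻¹ := by simpa using S.cyc_inv x⁻¹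
  apply S.tau_injective
  calc S.tau (S.dec (S.cyc x)) = (S.cyc (S.cyc x)⁻¹)⁻¹ := by rw [S.cyc_inv, inv_inv]
    _ = (S.cyc (S.tau (S.dec x⁻¹)))⁻¹ := by rw [hcyc, inv_inv]
    _ = S.tau (S.sl x) := by rw [S.cyc_tau, hsl, S.tau_inv, inv_inv]

lemma len_sl_lt (h : 1 < S.len x)
    (hAB : S.le S.Δ (S.phi x * S.iota x) ∨ S.le (S.phi x * S.iota x) S.Δ) :
    S.len (S.sl x) < S.len x := by
  rcases hAB with hA | hB
  · rw [S.sl_of_delta_le hA, S.len_tau]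
    exact S.len_dec_lt_of_delta_le h hA
  · rw [S.sl_of_le_delta hB]
    exact S.len_cyc_lt_of_le_delta h hB

lemma len_cyc_dec_lt (h : 1 < S.len x)
    (hAB : S.le S.Δ (S.phi x * S.iota x) ∨ S.le (S.phi x * S.iota x) S.Δ) :
    S.len (S.cyc (S.dec x)) < S.len x := by
  by_cases hA : S.le S.Δ (S.phi x * S.iota x)
  · exact (S.len_cyc_le _).trans_lt (S.len_dec_lt_of_delta_le h hA)
  · rw [S.cyc_dec_of_not_delta_le h hA]
    exact S.len_sl_lt h hAB

lemma len_dec_cyc_lt (h : 1 < S.len x)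
    (hAB : S.le S.Δ (S.phi x * S.iota x) ∨ S.le (S.phi x * S.iota x) S.Δ) :
    S.len (S.dec (S.cyc x)) < S.len x := by
  by_cases hB : S.le (S.phi x * S.iota x) S.Δ
  · exact (S.len_dec_le _).trans_lt (S.len_cyc_lt_of_le_delta h hB)
  · rw [S.dec_cyc_of_not_le_delta h hB]
    exact S.len_sl_lt h hAB

end Sliding

end Garside

open Garside in
theorem statement4 {G : Type*} [Group G] (S : Garside G) (x : G) (h : 1 < S.len x) :
    (S.le S.Δ (S.phi x * S.iota x) → S.le (S.phi x * S.iota x) S.Δ →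
      S.sl x = S.tau (S.dec x) ∧ S.sl x = S.cyc x ∧ S.len (S.sl x) < S.len x) ∧
    (¬ S.le S.Δ (S.phi x * S.iota x) → S.le (S.phi x * S.iota x) S.Δ →
      S.sl x = S.cyc (S.dec x) ∧ S.sl x = S.cyc x ∧ S.len (S.sl x) < S.len x) ∧
    (S.le S.Δ (S.phi x * S.iota x) → ¬ S.le (S.phi x * S.iota x) S.Δ →
      S.sl x = S.tau (S.dec x) ∧ S.sl x = S.dec (S.cyc x) ∧ S.len (S.sl x) < S.len x) ∧
    (¬ S.le S.Δ (S.phi x * S.iota x) → ¬ S.le (S.phi x * S.iota x) S.Δ →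
      S.sl x = S.cyc (S.dec x) ∧ S.sl x = S.dec (S.cyc x)) ∧
    ((S.len (S.cyc (S.dec x)) = S.len x ∨ S.len (S.dec (S.cyc x)) = S.len x) →
      (¬ S.le S.Δ (S.phi x * S.iota x) ∧ ¬ S.le (S.phi x * S.iota x) S.Δ) ∧
        S.dec (S.cyc x) = S.cyc (S.dec x)) := by
  refine ⟨fun hA hB => ⟨S.sl_of_delta_le hA, S.sl_of_le_delta hB, S.len_sl_lt h (.inl hA)⟩,
    fun hA hB => ⟨(S.cyc_dec_of_not_delta_le h hA).symm, S.sl_of_le_delta hB,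
      S.len_sl_lt h (.inr hB)⟩,
    fun hA hB => ⟨S.sl_of_delta_le hA, (S.dec_cyc_of_not_le_delta h hB).symm,
      S.len_sl_lt h (.inl hA)⟩,
    fun hA hB => ⟨(S.cyc_dec_of_not_delta_le h hA).symm, (S.dec_cyc_of_not_le_delta h hB).symm⟩,
    fun hlen => ?_⟩
  have hAB : ¬S.le S.Δ (S.phi x * S.iota x) ∧ ¬S.le (S.phi x * S.iota x) S.Δ := by
    rw [← not_or]
    intro hAB
    rcases hlen with hlen | hlen
    · exact (S.len_cyc_dec_lt h hAB).ne hlen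
    · exact (S.len_dec_cyc_lt h hAB).ne hlen
  exact ⟨hAB, by rw [S.dec_cyc_of_not_le_delta h hAB.2, S.cyc_dec_of_not_delta_le h hAB.1]⟩

end GarsidePaper
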